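/- arXiv:1205.6617 — 4 statements merged into one kernel-verified Lean document; each statement's English description precedes it below -/
import Mathlib

section
/- Fix σ² ∈ [C⁻², C²] with C > 1. Define f(x) = ln x + σ²/x − ln σ² − 1 for x > 0. Then for all x ∈ [C⁻², C²], f(x) ≥ (1/(4C⁴)) (x − σ²)². -/
/-!
`f x = φ (x / σ²)` with `φ t = log t + 1/t - 1`, and `φ' t = (t - 1) / t²`. Comparing derivatives,
`φ t` dominates `(t - 1)² / (2 t²)` on `[1, ∞)` and `(t - 1)² / 2` on `(0, 1]`; in terms of `x` both
say `f x ≥ (x - σ²)² / (2 max(x, σ²)²)`, and `max(x, σ²) ≤ C²`.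
-/

open Real Set

lemma hasDerivAt_log_add_inv_sub_one {t : ℝ} (ht : 0 < t) :
    HasDerivAt (fun s => log s + s⁻¹ - 1) ((t - 1) / t ^ 2) t := by
  refine (((hasDerivAt_log ht.ne').add (hasDerivAt_inv ht.ne')).sub_const 1).congr_deriv ?_
  field_simp
  ring

lemma sq_sub_one_div_two_mul_sq_le_log_add_inv_sub_one {t : ℝ} (ht : 1 ≤ t) :
    (t - 1) ^ 2 / (2 * t ^ 2) ≤ log t + t⁻¹ - 1 := by
  let g : ℝ → ℝ := fun s => log s + s⁻¹ - 1 - (s - 1) ^ 2 / (2 * s ^ 2)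
  have hg : ∀ s, 0 < s → HasDerivAt g ((s - 1) ^ 2 / s ^ 3) s := fun s hs => by
    have hq : HasDerivAt (fun s : ℝ => (s - 1) ^ 2 / (2 * s ^ 2)) ((s - 1) / s ^ 3) s := by
      refine ((((hasDerivAt_id s).sub_const 1).fun_pow 2).div
        ((hasDerivAt_pow 2 s).const_mul 2) (by positivity)).congr_deriv ?_
      simp only [id]
      field_simp
      ring
    refine ((hasDerivAt_log_add_inv_sub_one hs).sub hq).congr_deriv ?_
    field_simp
  have hmono : MonotoneOn g (Ici 1) := by
    refine monotoneOn_of_hasDerivWithinAt_nonneg (convex_Ici 1)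
      (fun s hs => (hg s (by linarith [mem_Ici.mp hs])).continuousAt.continuousWithinAt)
      (fun s hs => (hg s ?_).hasDerivWithinAt) (fun s hs => ?_)
    all_goals rw [interior_Ici] at hs
    · exact one_pos.trans hs
    · have : 0 < s := one_pos.trans hs
      positivity
  have := hmono self_mem_Ici ht ht
  simp only [g, log_one, inv_one] at this
  linarith

lemma sq_sub_one_div_two_le_log_add_inv_sub_one {t : ℝ} (ht₀ : 0 < t) (ht : t ≤ 1) :
    (t - 1) ^ 2 / 2 ≤ log t + t⁻¹ - 1 := by
  let g : ℝ → ℝ := fun s => log s + s⁻¹ - 1 - (s - 1) ^ 2 / 2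
  have hg : ∀ s, 0 < s → HasDerivAt g (-((s - 1) ^ 2 * (s + 1) / s ^ 2)) s := fun s hs => by
    refine ((hasDerivAt_log_add_inv_sub_one hs).sub
      ((((hasDerivAt_id s).sub_const 1).fun_pow 2).div_const 2)).congr_deriv ?_
    simp only [id]
    field_simp
    ring
  have hanti : AntitoneOn g (Ioc 0 1) := by
    refine antitoneOn_of_hasDerivWithinAt_nonpos (convex_Ioc 0 1)
      (fun s hs => (hg s hs.1).continuousAt.continuousWithinAt)
      (fun s hs => (hg s ?_).hasDerivWithinAt) (fun s hs => ?_)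
    all_goals rw [interior_Ioc] at hs
    · exact hs.1
    · have : 0 < s := hs.1
      have : 0 ≤ (s - 1) ^ 2 * (s + 1) / s ^ 2 := by positivity
      linarith
  have := hanti ⟨ht₀, ht⟩ ⟨one_pos, le_rfl⟩ ht
  simp only [g, log_one, inv_one] at this
  linarith

lemma sq_sub_div_two_mul_sq_le_log_add_div_sub_log_sub_one {a b M : ℝ} (ha : 0 < a) (hb : 0 < b)
    (haM : a ≤ M) (hbM : b ≤ M) :
    (b - a) ^ 2 / (2 * M ^ 2) ≤ log b + a / b - log a - 1 := by
  have hφ : log b + a / b - log a - 1 = log (b / a) + (b / a)⁻¹ - 1 := by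
    rw [log_div hb.ne' ha.ne', inv_div]
    ring
  rw [hφ]
  rcases le_total a b with hab | hba
  · calc (b - a) ^ 2 / (2 * M ^ 2) ≤ (b - a) ^ 2 / (2 * b ^ 2) := by gcongr
      _ = (b / a - 1) ^ 2 / (2 * (b / a) ^ 2) := by field_simp
      _ ≤ _ := sq_sub_one_div_two_mul_sq_le_log_add_inv_sub_one ((one_le_div ha).mpr hab)
  · calc (b - a) ^ 2 / (2 * M ^ 2) ≤ (b - a) ^ 2 / (2 * a ^ 2) := by gcongr
      _ = (b / a - 1) ^ 2 / 2 := by field_simp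
      _ ≤ _ := sq_sub_one_div_two_le_log_add_inv_sub_one (by positivity) ((div_le_one ha).mpr hba)

theorem log_quadratic_lower_bound (C σ2 : ℝ) (hC : 1 < C)
    (hσl : C⁻¹ ^ 2 ≤ σ2) (hσu : σ2 ≤ C ^ 2) :
    ∀ x : ℝ, C⁻¹ ^ 2 ≤ x → x ≤ C ^ 2 →
      (1 / (4 * C ^ 4)) * (x - σ2) ^ 2 ≤ Real.log x + σ2 / x - Real.log σ2 - 1 := by
  intro x hxl hxu
  have hC₀ : 0 < C⁻¹ ^ 2 := by
    have : 0 < C := by linarith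
    positivity
  calc 1 / (4 * C ^ 4) * (x - σ2) ^ 2 ≤ (x - σ2) ^ 2 / (2 * (C ^ 2) ^ 2) := by
        rw [← pow_mul, one_div_mul_eq_div]
        gcongr
        norm_num
    _ ≤ _ := sq_sub_div_two_mul_sq_le_log_add_div_sub_log_sub_one (hC₀.trans_le hσl)
        (hC₀.trans_le hxl) hσu hxu
end

section
/- Let Σ_ee be N×N positive definite, Λ* an N×r matrix, M* an r×r positive semidefinite matrix, and Λ an N×r matrix with Λ'Σ_ee⁻¹Λ positive definite. Then the r×r matrix M* Λ*' Σ_ee⁻¹ Λ* − M* Λ*' Σ_ee⁻¹ Λ (Λ'Σ_ee⁻¹Λ)⁻¹ Λ' Σ_ee⁻¹ Λ* has nonnegative trace. -/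
/-!
With `W = Σ_ee⁻¹` and `K = I - Λ (Λ' W Λ)⁻¹ Λ' W`, the weighted projection residual
`W - W Λ (Λ' W Λ)⁻¹ Λ' W` equals `K' W K`, hence is positive semidefinite. The matrix in question
is `M* (Λ*' K' W K Λ*)`, a product of two positive semidefinite matrices, and such a product
`A B` has nonnegative trace because `tr (A B) = tr (√A B √A)`.
-/

open Matrix
open scoped MatrixOrder ComplexOrder

namespace Matrix

variable {m n R 𝕜 : Type*} [Fintype m] [Fintype n] [DecidableEq m]

lemma inv_mul_mul_inv_self [CommRing R] (B : Matrix m m R) : B⁻¹ * B * B⁻¹ = B⁻¹ := by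
  rcases B.nonsing_inv_cancel_or_zero with ⟨hBinvB, -⟩ | hzero
  · rw [hBinvB, Matrix.one_mul]
  · rw [hzero, Matrix.zero_mul, Matrix.zero_mul]

lemma conjTranspose_mul_mul_eq_sub [DecidableEq n] [CommRing R] [StarRing R] {W : Matrix n n R}
    (hW : W.IsHermitian) (A : Matrix n m R) :
    (1 - A * (Aᴴ * W * A)⁻¹ * Aᴴ * W)ᴴ * W * (1 - A * (Aᴴ * W * A)⁻¹ * Aᴴ * W) =
      W - W * A * (Aᴴ * W * A)⁻¹ * Aᴴ * W := by
  have hG : (Aᴴ * W * A)⁻¹ᴴ = (Aᴴ * W * A)⁻¹ := (isHermitian_conjTranspose_mul_mul A hW).inv.eq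
  have hGBG := inv_mul_mul_inv_self (Aᴴ * W * A)
  generalize (Aᴴ * W * A)⁻¹ = G at hG hGBG
  have hGBG' : G * (Aᴴ * (W * (A * (G * (Aᴴ * W))))) = G * (Aᴴ * W) := by
    simpa only [Matrix.mul_assoc] using congrArg (· * (Aᴴ * W)) hGBG
  simp only [conjTranspose_sub, conjTranspose_one, conjTranspose_mul, hW.eq, hG,
    conjTranspose_conjTranspose, Matrix.sub_mul, Matrix.mul_sub, Matrix.one_mul, Matrix.mul_one,
    Matrix.mul_assoc, hGBG']
  abel

lemma PosSemidef.sub_mul_mul_inv_mul_mul [CommRing R] [PartialOrder R] [StarRing R]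
    {W : Matrix n n R} (hW : W.PosSemidef) (A : Matrix n m R) :
    (W - W * A * (Aᴴ * W * A)⁻¹ * Aᴴ * W).PosSemidef := by
  classical
  exact conjTranspose_mul_mul_eq_sub hW.isHermitian A ▸ hW.conjTranspose_mul_mul_same _

lemma PosSemidef.trace_mul_nonneg [DecidableEq n] [RCLike 𝕜] {A B : Matrix n n 𝕜}
    (hA : A.PosSemidef) (hB : B.PosSemidef) : 0 ≤ (A * B).trace := by
  obtain ⟨hS, hSS⟩ : (CFC.sqrt A).IsHermitian ∧ CFC.sqrt A * CFC.sqrt A = A :=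
    ⟨(CFC.sqrt_nonneg A).posSemidef.isHermitian, CFC.sqrt_mul_sqrt_self A hA.nonneg⟩
  calc 0 ≤ ((CFC.sqrt A)ᴴ * B * CFC.sqrt A).trace := (hB.conjTranspose_mul_mul_same _).trace_nonneg
    _ = (A * B).trace := by rw [hS.eq, trace_mul_comm, ← Matrix.mul_assoc, hSS]

end Matrix

theorem trace_projection_residual_nonneg_general {N r : ℕ}
    (See : Matrix (Fin N) (Fin N) ℝ) (Λstar Λ : Matrix (Fin N) (Fin r) ℝ)
    (Mstar : Matrix (Fin r) (Fin r) ℝ)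
    (hS : See.PosDef) (hM : Mstar.PosSemidef) :
    0 ≤ (Mstar * Λstarᵀ * See⁻¹ * Λstar
        - Mstar * Λstarᵀ * See⁻¹ * Λ * (Λᵀ * See⁻¹ * Λ)⁻¹ * Λᵀ * See⁻¹ * Λstar).trace := by
  have hres := (hS.posSemidef.inv.sub_mul_mul_inv_mul_mul Λ).conjTranspose_mul_mul_same Λstar
  simp only [conjTranspose_eq_transpose_of_trivial] at hres
  have hfactor : Mstar * Λstarᵀ * See⁻¹ * Λstar
      - Mstar * Λstarᵀ * See⁻¹ * Λ * (Λᵀ * See⁻¹ * Λ)⁻¹ * Λᵀ * See⁻¹ * Λstar =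
      Mstar * (Λstarᵀ * (See⁻¹ - See⁻¹ * Λ * (Λᵀ * See⁻¹ * Λ)⁻¹ * Λᵀ * See⁻¹) * Λstar) := by
    simp only [Matrix.mul_sub, Matrix.sub_mul, Matrix.mul_assoc]
  rw [hfactor]
  exact hM.trace_mul_nonneg hres

theorem trace_projection_residual_nonneg {N r : ℕ}
    (See : Matrix (Fin N) (Fin N) ℝ) (Λstar Λ : Matrix (Fin N) (Fin r) ℝ)
    (Mstar : Matrix (Fin r) (Fin r) ℝ)
    (hS : See.PosDef) (hM : Mstar.PosSemidef) (hΛ : (Λᵀ * See⁻¹ * Λ).PosDef) :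
    0 ≤ (Mstar * Λstarᵀ * See⁻¹ * Λstar
        - Mstar * Λstarᵀ * See⁻¹ * Λ * (Λᵀ * See⁻¹ * Λ)⁻¹ * Λᵀ * See⁻¹ * Λstar).trace :=
  trace_projection_residual_nonneg_general See Λstar Λ Mstar hS hM
end

section
/- Let P be a positive definite r×r matrix and A an r×r matrix. If the quadratic form A' P A − P A is zero (i.e., P A = A' P A) and I_r − A is invertible, then A = 0. -/
/-!
Transposing `P A = Aᵀ P A` and using the symmetry of `P` gives `Aᵀ P = P A`, hence
`P A² = Aᵀ P A = P A`, i.e. `P A (I - A) = 0`. Cancelling the units `I - A` and `P` leaves `A = 0`.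
-/

open Matrix

theorem Matrix.transpose_mul_eq_mul_of_mul_eq_transpose_mul_mul {n R : Type*} [Fintype n]
    [CommRing R] {P A : Matrix n n R} (hP : Pᵀ = P) (h : P * A = Aᵀ * P * A) :
    Aᵀ * P = P * A := by
  have h' := congrArg transpose h
  simp only [transpose_mul, transpose_transpose, hP] at h'
  rw [h', ← Matrix.mul_assoc, ← h]

theorem mul_eq_zero_of_mul_mul_self_eq_of_isUnit_one_sub {R : Type*} [Ring R] {x a : R}
    (h : x * a * a = x * a) (hu : IsUnit (1 - a)) : x * a = 0 :=
  hu.mul_left_eq_zero.mp (by rw [mul_sub, mul_one, h, sub_self])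

theorem ic1_identification {r : ℕ} (P A : Matrix (Fin r) (Fin r) ℝ)
    (hP : P.PosDef) (h : P * A = Aᵀ * P * A)
    (hinv : IsUnit ((1 : Matrix (Fin r) (Fin r) ℝ) - A)) :
    A = 0 := by
  have hPsymm : Pᵀ = P := hP.isHermitian
  have hPA : P * A * A = P * A :=
    calc P * A * A = Aᵀ * P * A := by
          rw [transpose_mul_eq_mul_of_mul_eq_transpose_mul_mul hPsymm h]
      _ = P * A := h.symm
  exact hP.isUnit.mul_right_eq_zero.mp
    (mul_eq_zero_of_mul_mul_self_eq_of_isUnit_one_sub hPA hinv)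
end

section
/- Let U be an r×r real upper triangular matrix and let D₁, D₂ be r×r diagonal matrices with strictly positive diagonal entries such that U' D₁ U = D₂. Then U is diagonal. -/
/-! Since `Uᵀ D₁ U = D₂` with `D₂` invertible, `U` is invertible and `D₁ U = (Uᵀ)⁻¹ D₂`.
The left side is upper triangular and the right side lower triangular (inverses of triangular
matrices are triangular of the same kind), so `D₁ U` is diagonal, and so is `U`. -/

open Matrix

namespace Matrix

variable {n R K : Type*}

theorem IsUpperTriangular.isDiag_of_isLowerTriangular [LinearOrder n] [Zero R]
    {M : Matrix n n R} (hU : M.IsUpperTriangular) (hL : M.IsLowerTriangular) : M.IsDiag :=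
  fun _ _ hij => hij.lt_or_gt.elim (fun h => hL (OrderDual.toDual_lt_toDual.mpr h)) (fun h => hU h)

theorem IsDiag.of_diagonal_mul [Fintype n] [DecidableEq n] [Semiring R]
    [NoZeroDivisors R] {d : n → R} {M : Matrix n n R} (hd : ∀ i, d i ≠ 0)
    (h : (diagonal d * M).IsDiag) : M.IsDiag := fun i j hij => by
  simpa [diagonal_mul, hd i] using h hij

variable [Fintype n] [DecidableEq n] [Field K]

theorem isUnit_det_of_transpose_mul_diagonal_mul_eq_diagonal {U : Matrix n n K}
    {d₁ d₂ : n → K} (hd₂ : ∀ i, d₂ i ≠ 0) (h : Uᵀ * diagonal d₁ * U = diagonal d₂) :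
    IsUnit U.det := by
  have hdet : Uᵀ.det * (∏ i, d₁ i) * U.det = ∏ i, d₂ i := by
    rw [← det_diagonal, ← det_diagonal, ← h, det_mul, det_mul]
  refine isUnit_iff_ne_zero.mpr fun hzero => ?_
  rw [hzero, mul_zero, eq_comm] at hdet
  exact Finset.prod_ne_zero_iff.mpr (fun i _ => hd₂ i) hdet

theorem IsUpperTriangular.isDiag_of_transpose_mul_diagonal_mul_eq_diagonal [LinearOrder n]
    {U : Matrix n n K} {d₁ d₂ : n → K} (hU : U.IsUpperTriangular) (hd₁ : ∀ i, d₁ i ≠ 0)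
    (hd₂ : ∀ i, d₂ i ≠ 0) (h : Uᵀ * diagonal d₁ * U = diagonal d₂) : U.IsDiag := by
  have hUdet := isUnit_det_of_transpose_mul_diagonal_mul_eq_diagonal hd₂ h
  have := Uᵀ.invertibleOfIsUnitDet (by rwa [det_transpose])
  have heq : diagonal d₁ * U = Uᵀ⁻¹ * diagonal d₂ := by
    rw [← h, Matrix.mul_assoc, inv_mul_cancel_left_of_invertible]
  have hupper : (diagonal d₁ * U).IsUpperTriangular := (blockTriangular_diagonal d₁).mul hU
  have hlower : (diagonal d₁ * U).IsLowerTriangular :=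
    heq ▸ (blockTriangular_inv_of_blockTriangular hU.transpose).mul (blockTriangular_diagonal d₂)
  exact .of_diagonal_mul hd₁ (hupper.isDiag_of_isLowerTriangular hlower)

end Matrix

theorem upper_triangular_diag_congruence_is_diag {r : ℕ}
    (U : Matrix (Fin r) (Fin r) ℝ) (d₁ d₂ : Fin r → ℝ)
    (hU : ∀ i j : Fin r, j < i → U i j = 0)
    (hd₁ : ∀ i, 0 < d₁ i) (hd₂ : ∀ i, 0 < d₂ i)
    (h : Uᵀ * Matrix.diagonal d₁ * U = Matrix.diagonal d₂) :
    ∀ i j : Fin r, i ≠ j → U i j = 0 :=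
  IsUpperTriangular.isDiag_of_transpose_mul_diagonal_mul_eq_diagonal (fun i j => hU i j)
    (fun i => (hd₁ i).ne') (fun i => (hd₂ i).ne') h
end
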